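/- arXiv:1009.0300 — 2 statements merged into one kernel-verified Lean document; each statement's English description precedes it below -/
import Mathlib

section
/- For an election E, a candidate c, and k > 0: there exists an election E¹ obtained from E by only adding voters in which c is the Condorcet winner and at most k voters were added, if and only if there exists an election E² obtained from E by deleting some voters and adding some voters, in which c is the Condorcet winner, and the total number of deleted plus added voters is at most k. -/
/-- Number of voters preferring `a` to `b`. -/
noncomputable def countPref {V C : Type*} [Fintype V] (O : V → C → C → Prop) (a b : C) : ℕ :=
  Nat.card {i : V // O i a b}

/-- `c` is a Condorcet winner: a strict majority of voters prefers `c` to every other candidate. -/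
def IsCondorcetWinner {V C : Type*} [Fintype V] (O : V → C → C → Prop) (c : C) : Prop :=
  ∀ b : C, b ≠ c → Fintype.card V < 2 * countPref O c b

/-!
Against a fixed rival `b`, the candidate `c` wins iff the margin
`2 * (voters preferring c to b) - (number of voters)` is positive. Deleting a voter raises this
margin by at most one, while adding a voter who ranks `c` first raises it by exactly one; so each
deletion can be traded for such an addition at the same cost.
-/

open Function

theorem exists_isStrictTotalOrder_top {C : Type*} (c : C) :
    ∃ r : C → C → Prop, IsStrictTotalOrder C r ∧ ∀ b, b ≠ c → r c b := by
  classical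
  let f : C → Bool × C := fun x => (decide (x ≠ c), x)
  have hinj : Injective f := fun _ _ h => congrArg Prod.snd h
  exact ⟨_, hinj.isStrictTotalOrder_onFun (r := Prod.Lex (α := Bool) (· < ·) WellOrderingRel),
    fun b hb => Prod.Lex.left _ _ (by simp [hb])⟩

section countPref

variable {V W C : Type*} [Fintype V] [Fintype W]

theorem countPref_comp_equiv (e : W ≃ V) (O : V → C → C → Prop) (a b : C) :
    countPref (O ∘ e) a b = countPref O a b :=
  Nat.card_congr (e.subtypeEquiv fun _ => Iff.rfl)

theorem countPref_comp_le_of_injective {f : W → V} (hf : Injective f) (O : V → C → C → Prop)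
    (a b : C) : countPref (O ∘ f) a b ≤ countPref O a b :=
  Nat.card_le_card_of_injective (fun i => ⟨f i.1, i.2⟩) fun _ _ h =>
    Subtype.ext (hf (congrArg Subtype.val h))

theorem countPref_sumElim (O₁ : V → C → C → Prop) (O₂ : W → C → C → Prop) (a b : C) :
    countPref (Sum.elim O₁ O₂) a b = countPref O₁ a b + countPref O₂ a b := by
  rw [countPref, countPref, countPref, ← Nat.card_sum]
  exact Nat.card_congr Equiv.subtypeSum

theorem countPref_const {r : C → C → Prop} {a b : C} (h : r a b) :
    countPref (fun _ : V => r) a b = Fintype.card V :=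
  (Nat.card_congr (Equiv.subtypeUnivEquiv fun _ => h)).trans Nat.card_eq_fintype_card

end countPref

namespace IsCondorcetWinner

variable {V₁ V₂ W₁ W₂ C : Type*} [Fintype V₁] [Fintype V₂] [Fintype W₁] [Fintype W₂]
  {O₁ : V₁ → C → C → Prop} {O₂ : V₂ → C → C → Prop} {c : C}

theorem sumElim_comp_equiv (e₁ : W₁ ≃ V₁) (e₂ : W₂ ≃ V₂)
    (h : IsCondorcetWinner (Sum.elim O₁ O₂) c) :
    IsCondorcetWinner (Sum.elim (O₁ ∘ e₁) (O₂ ∘ e₂)) c := by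
  intro b hb
  have hcomp : Sum.elim (O₁ ∘ e₁) (O₂ ∘ e₂) = Sum.elim O₁ O₂ ∘ e₁.sumCongr e₂ := by
    ext (i | i) <;> rfl
  rw [hcomp, countPref_comp_equiv, Fintype.card_congr (e₁.sumCongr e₂)]
  exact h b hb

theorem restore_deleted_add_top [DecidableEq V₁] {U : Type*} [Fintype U] {r : C → C → Prop}
    (D : Finset V₁) (hU : D.card ≤ Fintype.card U) (hr : ∀ b, b ≠ c → r c b)
    (h : IsCondorcetWinner (Sum.elim (fun i : {i // i ∉ D} => O₁ i.1) O₂) c) :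
    IsCondorcetWinner (Sum.elim O₁ (Sum.elim O₂ fun _ : U => r)) c := by
  intro b hb
  have hwin := h b hb
  have hkept : countPref (fun i : {i // i ∉ D} => O₁ i.1) c b ≤ countPref O₁ c b :=
    countPref_comp_le_of_injective Subtype.val_injective O₁ c b
  have hcard : Fintype.card {i // i ∉ D} = Fintype.card V₁ - D.card := by
    simp only [Fintype.card_subtype_compl, Fintype.card_coe]
  have hD := D.card_le_univ
  simp only [Fintype.card_sum, countPref_sumElim, countPref_const (hr b hb)] at hwin ⊢
  omega

end IsCondorcetWinner

theorem stmt11_general {C : Type*} {n : ℕ}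
    (O : Fin n → C → C → Prop)
    (c : C) (k : ℕ) :
    (∃ m : ℕ, m ≤ k ∧ ∃ O' : Fin m → C → C → Prop,
      (∀ j, IsStrictTotalOrder C (O' j)) ∧
      IsCondorcetWinner (Sum.elim O O' : Fin n ⊕ Fin m → C → C → Prop) c)
    ↔
    (∃ (D : Finset (Fin n)) (m : ℕ), D.card + m ≤ k ∧
      ∃ O' : Fin m → C → C → Prop,
        (∀ j, IsStrictTotalOrder C (O' j)) ∧
        IsCondorcetWinner
          (Sum.elim (fun i : {i : Fin n // i ∉ D} => O i.1) O'
            : {i : Fin n // i ∉ D} ⊕ Fin m → C → C → Prop) c) := by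
  constructor
  · rintro ⟨m, hm, O', hO', hwin⟩
    exact ⟨∅, m, by simpa using hm, O', hO',
      hwin.sumElim_comp_equiv (Equiv.subtypeUnivEquiv fun i => Finset.notMem_empty i)
        (Equiv.refl _)⟩
  · rintro ⟨D, m, hm, O', hO', hwin⟩
    obtain ⟨r, hr, hrc⟩ := exists_isStrictTotalOrder_top c
    refine ⟨m + D.card, by omega, Sum.elim O' (fun _ : Fin D.card => r) ∘ finSumFinEquiv.symm,
      fun j => ?_, (hwin.restore_deleted_add_top D (by simp) hrc).sumElim_comp_equiv (Equiv.refl _)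
        finSumFinEquiv.symm⟩
    rw [comp_apply]
    rcases finSumFinEquiv.symm j with j | _
    exacts [hO' j, hr]

/-- for any election, candidate `c`, and `k > 0`: `c` can be made the
Condorcet winner by adding at most `k` voters iff `c` can be made the Condorcet winner
by deleting some voters and adding some voters, with the total number of deleted plus
added voters at most `k`. -/
theorem stmt11 {C : Type*} [Fintype C] {n : ℕ}
    (O : Fin n → C → C → Prop) (hO : ∀ i, IsStrictTotalOrder C (O i))
    (c : C) (k : ℕ) (hk : 0 < k) :
    (∃ m : ℕ, m ≤ k ∧ ∃ O' : Fin m → C → C → Prop,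
      (∀ j, IsStrictTotalOrder C (O' j)) ∧
      IsCondorcetWinner (Sum.elim O O' : Fin n ⊕ Fin m → C → C → Prop) c)
    ↔
    (∃ (D : Finset (Fin n)) (m : ℕ), D.card + m ≤ k ∧
      ∃ O' : Fin m → C → C → Prop,
        (∀ j, IsStrictTotalOrder C (O' j)) ∧
        IsCondorcetWinner
          (Sum.elim (fun i : {i : Fin n // i ∉ D} => O i.1) O'
            : {i : Fin n // i ∉ D} ⊕ Fin m → C → C → Prop) c) :=
  stmt11_general O c k
end

section
/- In the 29-voter election over {a,b,c,d} with 2 voters a≻b≻c≻d, 2 voters a≻c≻d≻b, 1 voter a≻b≻d≻c, 8 voters b≻c≻a≻d, 8 voters c≻d≻a≻b, and 8 voters d≻b≻a≻c, the deletion score of candidate b equals 8: deleting the 8 c-voters makes b the Condorcet winner, and no set of at most 7 voters can be deleted to achieve this. -/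
/-- Candidates `a=0`, `b=1`, `c=2`, `d=3`. The ballot (ranking, best first) of each of
the 29 voters: 2 voters a≻b≻c≻d, 2 voters a≻c≻d≻b, 1 voter a≻b≻d≻c, 8 voters b≻c≻a≻d,
8 voters c≻d≻a≻b, and 8 voters d≻b≻a≻c. -/
def theBallot (i : Fin 29) : List (Fin 4) :=
  if i.val < 2 then [0, 1, 2, 3]
  else if i.val < 4 then [0, 2, 3, 1]
  else if i.val < 5 then [0, 1, 3, 2]
  else if i.val < 13 then [1, 2, 0, 3]
  else if i.val < 21 then [2, 3, 0, 1]
  else [3, 1, 0, 2]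

/-- The preference profile of the 29-voter election: voter `i` prefers `x` to `y` iff
`x` occurs before `y` on voter `i`'s ballot. -/
def theProfile (i : Fin 29) (x y : Fin 4) : Prop :=
  (theBallot i).idxOf x < (theBallot i).idxOf y

/-- `c` becomes the Condorcet winner after changing the votes of at most `k` voters. -/
def ReplacementScoreLE (c : Fin 4) (k : ℕ) : Prop :=
  ∃ O' : Fin 29 → Fin 4 → Fin 4 → Prop,
    (∀ i, IsStrictTotalOrder (Fin 4) (O' i)) ∧
    Nat.card {i : Fin 29 // O' i ≠ theProfile i} ≤ k ∧
    IsCondorcetWinner O' c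

/-- `c` is the Condorcet winner after deleting the voters in `D`. -/
def WinsAfterDeleting (D : Finset (Fin 29)) (c : Fin 4) : Prop :=
  IsCondorcetWinner (fun i : {i : Fin 29 // i ∉ D} => theProfile i.1) c

theorem countPref_subtype_le {V C : Type*} [Fintype V] (O : V → C → C → Prop) (p : V → Prop)
    [Fintype {i // p i}] (a b : C) :
    countPref (fun i : {i // p i} => O i) a b ≤ countPref O a b :=
  Nat.card_le_card_of_injective (fun i => ⟨i.1.1, i.2⟩) fun _ _ h => by
    simpa [Subtype.ext_iff] using h

theorem not_isCondorcetWinner_of_deleting {V C : Type*} [Fintype V] [DecidableEq V]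
    (O : V → C → C → Prop) (D : Finset V) {b c : C} (hbc : b ≠ c)
    (h : 2 * countPref O c b + D.card ≤ Fintype.card V) :
    ¬ IsCondorcetWinner (fun i : {i // i ∉ D} => O i) c := by
  intro hc
  have hmaj := hc b hbc
  have hsub := countPref_subtype_le O (· ∉ D) c b
  have hcard : Fintype.card {i // i ∉ D} = Fintype.card V - D.card := by
    rw [Fintype.card_subtype_compl, Fintype.card_coe]
  omega

instance (i : Fin 29) : DecidableRel (theProfile i) := fun _ _ =>
  inferInstanceAs (Decidable (_ < _))

theorem countPref_theProfile_one_three : countPref theProfile 1 3 = 11 := by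
  rw [countPref, Nat.card_eq_fintype_card]
  decide

theorem winsAfterDeleting_cVoters :
    WinsAfterDeleting (Finset.univ.filter (fun i : Fin 29 => 13 ≤ i.val ∧ i.val < 21)) 1 := by
  intro x
  rw [countPref, Nat.card_eq_fintype_card]
  revert x
  decide

/-- the deletion score of candidate `b` (candidate 1) equals 8: deleting
the 8 c-voters (voters 13–20) makes `b` the Condorcet winner, and no set of at most 7
voters can be deleted to achieve this. -/
theorem stmt16 :
    WinsAfterDeleting (Finset.univ.filter (fun i : Fin 29 => 13 ≤ i.val ∧ i.val < 21)) 1 ∧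
    (Finset.univ.filter (fun i : Fin 29 => 13 ≤ i.val ∧ i.val < 21)).card = 8 ∧
    (∀ D : Finset (Fin 29), D.card ≤ 7 → ¬ WinsAfterDeleting D 1) := by
  refine ⟨winsAfterDeleting_cVoters, by decide, fun D hD => ?_⟩
  refine not_isCondorcetWinner_of_deleting theProfile D (b := 3) (by decide) ?_
  rw [countPref_theProfile_one_three, Fintype.card_fin]
  omega
end
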